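/- arXiv:2506.05632 — 3 statements merged into one kernel-verified Lean document; each statement's English description precedes it below -/
import Mathlib

section
/- List matching lemma, unconditional form: under Gumbel-max list sampling, the matching probability satisfies Pr[Y ∈ {X^(1), …, X^(K)}] ≥ Σ_{j=1}^{N} K / ( Σ_{i=1}^{N} [ max{ q_i/q_j , p_i/p_j } + (K − 1)·q_i/q_j ] ). (Theorem 1, equation (3).) -/
/-!
Index the i.i.d. exponentials `x (i, k) = S i k` by the cells of the `N × K` array. Cell `(j, k)`
*wins its race* if `x (j, k) > 0` and `w (i, k') * x (j, k) < x (i, k')` for every other cell,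
with weights `w (i, k') = q i / q j` off column `k` and `max (q i / q j) (p i / p j)` in column
`k`. Since `w (i, k') ≥ q i / q j`, the winner is the unique argmin of `x (i, k') / q i`, so at most
one cell wins and, if `(j, k)` does, then `Y = j`; since `w (i, k) ≥ p i / p j`, it is also the
argmin of `x (i, k) / p i`, so `X k = j`. Conditioning on `x (j, k) = t`, the probability of a win
is `∫ e^{-t} ∏ e^{-w t} dt = 1 / (1 + ∑ w)`, product and sum over the other cells, and
`1 + ∑ w` is exactly the `j`-th denominator of the bound. Summing over the `N K` disjoint events
gives the theorem.
-/

open MeasureTheory ProbabilityTheory Real Set Finset Function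
open scoped ENNReal

namespace MeasureTheory

theorem measurePreserving_eval_prod_restrict_ne {ι α : Type*} [Fintype ι] [DecidableEq ι]
    [MeasurableSpace α] (μ : Measure α) [SigmaFinite μ] (i₀ : ι) :
    MeasurePreserving (fun x : ι → α => (x i₀, fun i : {i // i ≠ i₀} => x i))
      (Measure.pi fun _ => μ) (μ.prod (Measure.pi fun _ => μ)) := by
  have hsplit := measurePreserving_piEquivPiSubtypeProd (fun _ : ι => μ) (· = i₀)
  have hunique : MeasurePreserving (MeasurableEquiv.funUnique {i // i = i₀} α)
      (@Measure.pi _ _ (Subtype.fintype _) _ fun _ => μ) μ := by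
    convert measurePreserving_funUnique μ {i // i = i₀}
  exact (hunique.prod (MeasurePreserving.id _)).comp hsplit

end MeasureTheory

namespace ProbabilityTheory

section ExpMeasure

lemma expMeasure_eq_withDensity (r : ℝ) :
    expMeasure r = volume.withDensity (exponentialPDF r) := rfl

lemma measurable_exponentialPDF (r : ℝ) : Measurable (exponentialPDF r) :=
  (measurable_exponentialPDFReal r).ennreal_ofReal

variable {r : ℝ}

lemma expMeasure_Iic_zero (hr : 0 < r) : expMeasure r (Iic 0) = 0 := by
  have := isProbabilityMeasure_expMeasure hr
  rw [← ofReal_cdf, cdf_expMeasure_eq hr]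
  simp

lemma ae_pos_expMeasure (hr : 0 < r) : ∀ᵐ t ∂expMeasure r, 0 < t := by
  rw [ae_iff]
  simpa only [not_lt, ← Iic_def] using expMeasure_Iic_zero hr

lemma expMeasure_Ioi {a : ℝ} (hr : 0 < r) (ha : 0 ≤ a) :
    expMeasure r (Ioi a) = ENNReal.ofReal (exp (-(r * a))) := by
  have := isProbabilityMeasure_expMeasure hr
  rw [← compl_Iic, prob_compl_eq_one_sub measurableSet_Iic, ← ofReal_cdf, cdf_expMeasure_eq hr,
    if_pos ha, ← ENNReal.ofReal_one,
    ← ENNReal.ofReal_sub _ (sub_nonneg.2 (exp_le_one_iff.2 (by nlinarith)))]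
  ring_nf

lemma lintegral_exp_neg_mul_expMeasure {C : ℝ} (hr : 0 < r) (hC : 0 ≤ C) :
    ∫⁻ t, ENNReal.ofReal (exp (-(C * t))) ∂expMeasure r = ENNReal.ofReal (r / (r + C)) := by
  have hdensity : ∀ t, exponentialPDF r t * ENNReal.ofReal (exp (-(C * t)))
      = ENNReal.ofReal (r / (r + C)) * exponentialPDF (r + C) t := by
    intro t
    rcases lt_or_ge t 0 with ht | ht
    · simp [exponentialPDF_of_neg ht]
    rw [exponentialPDF_of_nonneg ht, exponentialPDF_of_nonneg ht,
      ← ENNReal.ofReal_mul (by positivity), ← ENNReal.ofReal_mul (by positivity)]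
    congr 1
    rw [mul_assoc, ← exp_add]
    field_simp
    ring_nf
  rw [expMeasure_eq_withDensity, lintegral_withDensity_eq_lintegral_mul _
    (measurable_exponentialPDF r) (by fun_prop)]
  simp only [Pi.mul_apply, hdensity]
  rw [lintegral_const_mul _ (measurable_exponentialPDF _),
    lintegral_exponentialPDF_eq_one (by positivity), mul_one]

end ExpMeasure

section Race

variable {ι : Type*}

def winsRace (c : ι → ℝ) (i₀ : ι) : Set (ι → ℝ) :=
  {x | 0 < x i₀ ∧ ∀ i ≠ i₀, c i * x i₀ < x i}

lemma measurableSet_winsRace [Countable ι] (c : ι → ℝ) (i₀ : ι) :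
    MeasurableSet (winsRace c i₀) := by
  unfold winsRace
  measurability

lemma div_lt_div_of_mem_winsRace {c w x : ι → ℝ} {i₀ i : ι} (hx : x ∈ winsRace c i₀)
    (hw₀ : 0 < w i₀) (hw : 0 < w i) (hi : i ≠ i₀) (hc : w i / w i₀ ≤ c i) :
    x i₀ / w i₀ < x i / w i := by
  have hlt : w i / w i₀ * x i₀ < x i :=
    (mul_le_mul_of_nonneg_right hc hx.1.le).trans_lt (hx.2 i hi)
  rw [div_lt_div_iff₀ hw₀ hw]
  rw [div_mul_eq_mul_div, div_lt_iff₀ hw₀] at hlt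
  linarith

lemma pairwise_disjoint_winsRace {c : ι → ι → ℝ} {w : ι → ℝ} (hw : ∀ i, 0 < w i)
    (hc : ∀ i₀ i, w i / w i₀ ≤ c i₀ i) :
    Pairwise (Disjoint on fun i₀ => winsRace (c i₀) i₀) := by
  intro i₀ i₁ hne
  refine Set.disjoint_left.2 fun x hx₀ hx₁ => ?_
  have h₀ := div_lt_div_of_mem_winsRace hx₀ (hw i₀) (hw i₁) hne.symm (hc i₀ i₁)
  have h₁ := div_lt_div_of_mem_winsRace hx₁ (hw i₁) (hw i₀) hne (hc i₁ i₀)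
  exact lt_asymm h₀ h₁

variable [Fintype ι] [DecidableEq ι] {r : ℝ}

theorem measure_pi_expMeasure_winsRace (hr : 0 < r) {c : ι → ℝ} (hc : ∀ i, 0 ≤ c i) (i₀ : ι) :
    Measure.pi (fun _ => expMeasure r) (winsRace c i₀)
      = ENNReal.ofReal (1 / (1 + ∑ i : {i // i ≠ i₀}, c i)) := by
  have := isProbabilityMeasure_expMeasure hr
  set C := ∑ i : {i // i ≠ i₀}, c i
  have hC : 0 ≤ C := sum_nonneg fun i _ => hc i
  set B : Set (ℝ × ({i // i ≠ i₀} → ℝ)) := {z | 0 < z.1 ∧ ∀ i : {i // i ≠ i₀}, c i * z.1 < z.2 i}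
  have hBmeas : MeasurableSet B := by measurability
  have hpre : winsRace c i₀ = (fun x : ι → ℝ => (x i₀, fun i : {i // i ≠ i₀} => x i)) ⁻¹' B := by
    ext x
    simp [winsRace, B]
  have hslice : ∀ t, 0 < t → Measure.pi (fun _ => expMeasure r) (Prod.mk t ⁻¹' B)
      = ENNReal.ofReal (exp (-(r * C * t))) := by
    intro t ht
    have hbox : Prod.mk t ⁻¹' B = univ.pi fun i : {i // i ≠ i₀} => Ioi (c i * t) := by
      ext y
      simp [B, ht]
    rw [hbox, Measure.pi_pi]
    simp_rw [expMeasure_Ioi hr (mul_nonneg (hc _) ht.le)]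
    rw [← ENNReal.ofReal_prod_of_nonneg (fun _ _ => (exp_pos _).le), ← exp_sum]
    simp only [C, sum_mul, mul_sum, ← sum_neg_distrib, mul_assoc]
  rw [hpre, (measurePreserving_eval_prod_restrict_ne _ i₀).measure_preimage
    hBmeas.nullMeasurableSet, Measure.prod_apply hBmeas,
    lintegral_congr_ae ((ae_pos_expMeasure hr).mono hslice),
    lintegral_exp_neg_mul_expMeasure hr (by positivity)]
  congr 1
  field_simp

theorem measure_pi_expMeasure_iUnion_winsRace (hr : 0 < r) {c : ι → ι → ℝ}
    {w : ι → ℝ} (hw : ∀ i, 0 < w i) (hc : ∀ i₀ i, w i / w i₀ ≤ c i₀ i) :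
    Measure.pi (fun _ => expMeasure r) (⋃ i₀, winsRace (c i₀) i₀)
      = ∑ i₀, ENNReal.ofReal (1 / (1 + ∑ i : {i // i ≠ i₀}, c i₀ i)) := by
  rw [measure_iUnion (pairwise_disjoint_winsRace hw hc) (fun i₀ => measurableSet_winsRace _ i₀),
    tsum_fintype]
  exact sum_congr rfl fun i₀ _ => measure_pi_expMeasure_winsRace hr
    (fun i => (div_pos (hw i) (hw i₀)).le.trans (hc i₀ i)) i₀

end Race

section GumbelMaxList

variable {ι κ : Type*} [DecidableEq κ]

noncomputable def listRaceWeight (p q : ι → ℝ) (j : ι) (k : κ) (m : ι × κ) : ℝ :=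
  if m.2 = k then max (q m.1 / q j) (p m.1 / p j) else q m.1 / q j

lemma div_le_listRaceWeight (p q : ι → ℝ) (j : ι) (k : κ) (m : ι × κ) :
    q m.1 / q j ≤ listRaceWeight p q j k m := by
  unfold listRaceWeight
  split_ifs
  exacts [le_max_left _ _, le_rfl]

lemma div_le_listRaceWeight_same_column (p q : ι → ℝ) (i j : ι) (k : κ) :
    p i / p j ≤ listRaceWeight p q j k (i, k) := by
  simp [listRaceWeight]

lemma eq_of_mem_winsRace_of_column_argmin {p q : ι → ℝ} (hp : ∀ i, 0 < p i) {x : ι × κ → ℝ}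
    {i j : ι} {k : κ} (hx : x ∈ winsRace (listRaceWeight p q j k) (j, k))
    (hi : ∀ i', i' ≠ i → x (i, k) / p i < x (i', k) / p i') : i = j := by
  by_contra hij
  have hwin := div_lt_div_of_mem_winsRace (w := fun m => p m.1) hx (hp j) (hp i)
    (i := (i, k)) (by simpa using hij) (div_le_listRaceWeight_same_column p q i j k)
  exact lt_asymm hwin (hi j (Ne.symm hij))

lemma eq_of_mem_winsRace_of_rowInf_argmin [Finite κ] {p q : ι → ℝ} (hq : ∀ i, 0 < q i)
    {x : ι × κ → ℝ} {i j : ι} {k : κ} (hx : x ∈ winsRace (listRaceWeight p q j k) (j, k))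
    (hi : ∀ i', i' ≠ i → (⨅ k', x (i, k')) / q i < (⨅ k', x (i', k')) / q i') : i = j := by
  by_contra hij
  have : Nonempty κ := ⟨k⟩
  obtain ⟨k₀, hk₀⟩ := exists_eq_ciInf_of_finite (f := fun k' => x (i, k'))
  have hwin := div_lt_div_of_mem_winsRace (w := fun m => q m.1) hx (hq j) (hq i)
    (i := (i, k₀)) (by simp [hij]) (div_le_listRaceWeight p q j k _)
  have hinf : (⨅ k', x (j, k')) / q j ≤ x (j, k) / q j :=
    div_le_div_of_nonneg_right (ciInf_le (finite_range _).bddBelow k) (hq j).le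
  have hlt := hi j (Ne.symm hij)
  simp only [← hk₀] at hlt
  linarith

variable [Fintype ι] [DecidableEq ι] [Fintype κ]

lemma one_add_sum_listRaceWeight_ne {p q : ι → ℝ} {j : ι} (hp : p j ≠ 0) (hq : q j ≠ 0)
    (k : κ) :
    1 + ∑ m : {m // m ≠ (j, k)}, listRaceWeight p q j k m
      = ∑ i, (max (q i / q j) (p i / p j) + ((Fintype.card κ : ℝ) - 1) * (q i / q j)) := by
  have hself : listRaceWeight p q j k (j, k) = 1 := by
    simp [listRaceWeight, div_self hp, div_self hq]
  nth_rw 1 [← hself]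
  rw [← Fintype.sum_eq_add_sum_subtype_ne, Fintype.sum_prod_type]
  refine sum_congr rfl fun i _ => ?_
  have : Nonempty κ := ⟨k⟩
  simp [listRaceWeight, sum_ite, filter_eq', filter_ne', Nat.cast_pred Fintype.card_pos]

lemma ofReal_sum_card_div_eq_sum_listRaceWeight {p q : ι → ℝ} (hp : ∀ i, p i ≠ 0)
    (hq : ∀ i, 0 < q i) :
    ENNReal.ofReal (∑ j, (Fintype.card κ : ℝ) /
        ∑ i, (max (q i / q j) (p i / p j) + ((Fintype.card κ : ℝ) - 1) * (q i / q j)))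
      = ∑ m₀ : ι × κ,
          ENNReal.ofReal (1 / (1 + ∑ m : {m // m ≠ m₀}, listRaceWeight p q m₀.1 m₀.2 m)) := by
  have hpos : ∀ m₀ : ι × κ, 0 < 1 + ∑ m : {m // m ≠ m₀}, listRaceWeight p q m₀.1 m₀.2 m :=
    fun m₀ => add_pos_of_pos_of_nonneg one_pos <| sum_nonneg fun m _ =>
      (div_pos (hq m.1.1) (hq m₀.1)).le.trans (div_le_listRaceWeight p q _ _ _)
  rw [← ENNReal.ofReal_sum_of_nonneg fun m₀ _ => (one_div_pos.2 (hpos m₀)).le,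
    Fintype.sum_prod_type]
  congr 1
  refine sum_congr rfl fun j _ => ?_
  simp only [one_add_sum_listRaceWeight_ne (hp j) (hq j).ne', sum_const, card_univ, nsmul_eq_mul]
  ring

end GumbelMaxList

end ProbabilityTheory

theorem list_matching_lemma_general
    {Ω : Type*} [MeasurableSpace Ω] (μ : Measure Ω) [IsProbabilityMeasure μ]
    (N K : ℕ)
    (p q : Fin N → ℝ) (hp : ∀ i, 0 < p i) (hq : ∀ i, 0 < q i)
    (S : Fin N → Fin K → Ω → ℝ) (hSmeas : ∀ i k, Measurable (S i k))
    (hSindep : iIndepFun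
      (fun ik : Fin N × Fin K => S ik.1 ik.2) μ)
    (hSexp : ∀ i k, μ.map (S i k) = expMeasure 1)
    (Y : Ω → Fin N)
    (X : Fin K → Ω → Fin N)
    -- `Y` is a.s. the unique argmin of `i ↦ (min_k S i k) / q i`
    (hY : ∀ᵐ ω ∂μ, ∀ i : Fin N, i ≠ Y ω →
      (⨅ k : Fin K, S (Y ω) k ω) / q (Y ω) < (⨅ k : Fin K, S i k ω) / q i)
    -- each `X k` is a.s. the unique argmin of `i ↦ S i k / p i`
    (hX : ∀ᵐ ω ∂μ, ∀ k : Fin K, ∀ i : Fin N, i ≠ X k ω →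
      S (X k ω) k ω / p (X k ω) < S i k ω / p i)
    : ENNReal.ofReal (∑ j : Fin N, (K : ℝ) /
        ∑ i : Fin N, (max (q i / q j) (p i / p j) + ((K : ℝ) - 1) * (q i / q j)))
      ≤ μ {ω | ∃ k : Fin K, X k ω = Y ω} := by
  let V : Ω → (Fin N × Fin K → ℝ) := fun ω m => S m.1 m.2 ω
  have hV : Measurable V := measurable_pi_lambda _ fun m => hSmeas m.1 m.2
  have hlaw : μ.map V = Measure.pi fun _ => expMeasure 1 := by
    rw [hSindep.map_fun_eq_pi_map (f := fun m : Fin N × Fin K => S m.1 m.2)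
      fun m => (hSmeas m.1 m.2).aemeasurable]
    simp only [hSexp]
  let race : Set (Fin N × Fin K → ℝ) := ⋃ m₀, winsRace (listRaceWeight p q m₀.1 m₀.2) m₀
  have hmatch : V ⁻¹' race ≤ᵐ[μ] {ω | ∃ k, X k ω = Y ω} := by
    filter_upwards [hY, hX] with ω hYω hXω hrace
    obtain ⟨⟨j, k⟩, hwin⟩ := mem_iUnion.1 hrace
    exact ⟨k, (eq_of_mem_winsRace_of_column_argmin hp hwin (hXω k)).trans
      (eq_of_mem_winsRace_of_rowInf_argmin hq hwin hYω).symm⟩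
  have hsum := ofReal_sum_card_div_eq_sum_listRaceWeight (κ := Fin K) (fun i => (hp i).ne') hq
  rw [Fintype.card_fin] at hsum
  calc _ = Measure.pi (fun _ => expMeasure 1) race := by
        rw [hsum, measure_pi_expMeasure_iUnion_winsRace one_pos (w := fun m => q m.1)
          (fun m => hq m.1) fun m₀ => div_le_listRaceWeight p q m₀.1 m₀.2]
    _ = μ (V ⁻¹' race) := by
        rw [← hlaw, Measure.map_apply hV (.iUnion fun m₀ => measurableSet_winsRace _ m₀)]
    _ ≤ μ {ω | ∃ k, X k ω = Y ω} := measure_mono_ae hmatch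

/-- **List matching lemma, unconditional form (Theorem 1, eq. (3)).**
Under Gumbel-max list sampling,
`Pr[Y ∈ {X 1, …, X K}] ≥ ∑ j, K / ∑ i (max (q i / q j) (p i / p j) + (K-1) * q i / q j)`. -/
theorem list_matching_lemma
    {Ω : Type*} [MeasurableSpace Ω] (μ : Measure Ω) [IsProbabilityMeasure μ]
    (N K : ℕ) (hN : 0 < N) (hK : 0 < K)
    (p q : Fin N → ℝ) (hp : ∀ i, 0 < p i) (hq : ∀ i, 0 < q i)
    (hpsum : ∑ i, p i = 1) (hqsum : ∑ i, q i = 1)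
    (S : Fin N → Fin K → Ω → ℝ) (hSmeas : ∀ i k, Measurable (S i k))
    (hSindep : iIndepFun
      (fun ik : Fin N × Fin K => S ik.1 ik.2) μ)
    (hSexp : ∀ i k, μ.map (S i k) = expMeasure 1)
    (Y : Ω → Fin N) (hYmeas : Measurable Y)
    (X : Fin K → Ω → Fin N) (hXmeas : ∀ k, Measurable (X k))
    -- `Y` is a.s. the unique argmin of `i ↦ (min_k S i k) / q i`
    (hY : ∀ᵐ ω ∂μ, ∀ i : Fin N, i ≠ Y ω →
      (⨅ k : Fin K, S (Y ω) k ω) / q (Y ω) < (⨅ k : Fin K, S i k ω) / q i)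
    -- each `X k` is a.s. the unique argmin of `i ↦ S i k / p i`
    (hX : ∀ᵐ ω ∂μ, ∀ k : Fin K, ∀ i : Fin N, i ≠ X k ω →
      S (X k ω) k ω / p (X k ω) < S i k ω / p i)
    : ENNReal.ofReal (∑ j : Fin N, (K : ℝ) /
        ∑ i : Fin N, (max (q i / q j) (p i / p j) + ((K : ℝ) - 1) * (q i / q j)))
      ≤ μ {ω | ∃ k : Fin K, X k ω = Y ω} :=
  list_matching_lemma_general μ N K p q hp hq S hSmeas hSindep hSexp Y X hY hX
end

section
/- Tightness of the list matching bound for degenerate proposal distributions: fix a probability mass function q on {1,…,N} with q_i > 0 for all i, and a positive integer K. The lower-bound expression F(p) = Σ_{j=1}^{N} K / ( Σ_{i=1}^{N} [ max{ q_i/q_j , p_i/p_j } + (K − 1)·q_i/q_j ] ), viewed as a function of a probability mass function p on {1,…,N} with p_i > 0 for all i, converges to q_1 as p tends to the point mass at 1 (that is, as p_2, …, p_N → 0 with p_1 = 1 − Σ_{i≥2} p_i). Since the matching probability equals Pr[Y = 1] = q_1 when the proposal distribution is the point mass at 1, the bound recovers the exact matching probability in this limit. -/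
open Filter Topology

/-!
At the point mass `δ` at `i₀`, the `i₀`-th denominator is `∑ i, K q i / q i₀ = K / q i₀`,
and it depends continuously on `p` there because `δ i₀ = 1 ≠ 0`; so the `i₀`-th summand
tends to `q i₀`. For `j ≠ i₀` the `j`-th denominator contains the term `p i₀ / p j`, which
blows up as `p j → 0⁺` while `p i₀ → 1`, so all the other summands tend to `0`.
-/

section

variable {ι : Type*} [Fintype ι]

noncomputable def listMatchingDenom (k : ℝ) (q p : ι → ℝ) (j : ι) : ℝ :=
  ∑ i, (max (q i / q j) (p i / p j) + (k - 1) * (q i / q j))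

theorem listMatchingDenom_single [DecidableEq ι] (k : ℝ) {q : ι → ℝ} (hq : ∀ i, 0 < q i)
    (i₀ : ι) : listMatchingDenom k q (Pi.single i₀ 1) i₀ = k * (∑ i, q i) / q i₀ := by
  rw [listMatchingDenom, Finset.mul_sum, Finset.sum_div]
  refine Finset.sum_congr rfl fun i _ => ?_
  have hmax : max (q i / q i₀) ((Pi.single i₀ 1 : ι → ℝ) i / (Pi.single i₀ 1 : ι → ℝ) i₀) =
      q i / q i₀ := by
    rcases eq_or_ne i i₀ with rfl | hi
    · simp [div_self (hq i).ne']
    · simp [Pi.single_eq_of_ne hi, (div_pos (hq i) (hq i₀)).le]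
  rw [hmax]
  ring

theorem continuousAt_listMatchingDenom_single [DecidableEq ι] (k : ℝ) (q : ι → ℝ) (i₀ : ι) :
    ContinuousAt (fun p => listMatchingDenom k q p i₀) (Pi.single i₀ 1) := by
  unfold listMatchingDenom
  fun_prop (disch := simp)

theorem div_le_listMatchingDenom {k : ℝ} (hk : 1 ≤ k) {q : ι → ℝ} (hq : ∀ i, 0 ≤ q i)
    (p : ι → ℝ) (i j : ι) : p i / p j ≤ listMatchingDenom k q p j := by
  have hq_div : ∀ l, 0 ≤ q l / q j := fun l => div_nonneg (hq l) (hq j)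
  have hcorr : ∀ l, 0 ≤ (k - 1) * (q l / q j) := fun l => mul_nonneg (sub_nonneg.2 hk) (hq_div l)
  calc p i / p j ≤ max (q i / q j) (p i / p j) := le_max_right _ _
    _ ≤ max (q i / q j) (p i / p j) + (k - 1) * (q i / q j) := le_add_of_nonneg_right (hcorr i)
    _ ≤ listMatchingDenom k q p j :=
        Finset.single_le_sum
          (fun l _ => add_nonneg ((hq_div l).trans (le_max_left _ (p l / p j))) (hcorr l))
          (Finset.mem_univ i)

theorem tendsto_listMatchingDenom_atTop [DecidableEq ι] {k : ℝ} (hk : 1 ≤ k) {q : ι → ℝ}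
    (hq : ∀ i, 0 ≤ q i) {i₀ j : ι} (hj : j ≠ i₀) :
    Tendsto (fun p => listMatchingDenom k q p j)
      (𝓝[{p | ∀ i, 0 < p i}] (Pi.single i₀ 1)) atTop := by
  have hcoord : ∀ i, Tendsto (fun p : ι → ℝ => p i)
      (𝓝[{p | ∀ i, 0 < p i}] (Pi.single i₀ 1)) (𝓝 ((Pi.single i₀ 1 : ι → ℝ) i)) := fun i =>
    ((continuous_apply i).tendsto _).mono_left nhdsWithin_le_nhds
  have hpi₀ : Tendsto (fun p : ι → ℝ => p i₀)
      (𝓝[{p | ∀ i, 0 < p i}] (Pi.single i₀ 1)) (𝓝 1) := by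
    simpa using hcoord i₀
  have hpj : Tendsto (fun p : ι → ℝ => p j)
      (𝓝[{p | ∀ i, 0 < p i}] (Pi.single i₀ 1)) (𝓝[>] 0) :=
    tendsto_nhdsWithin_iff.2 ⟨by simpa [Pi.single_eq_of_ne hj] using hcoord j,
      eventually_nhdsWithin_of_forall fun p hp => hp j⟩
  refine tendsto_atTop_mono (fun p => div_le_listMatchingDenom hk hq p i₀ j) ?_
  simp only [div_eq_mul_inv]
  exact hpi₀.pos_mul_atTop one_pos (tendsto_inv_nhdsGT_zero.comp hpj)

theorem tendsto_div_listMatchingDenom [DecidableEq ι] {k : ℝ} (hk : 1 ≤ k) {q : ι → ℝ}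
    (hq : ∀ i, 0 < q i) (hqsum : ∑ i, q i = 1) (i₀ j : ι) :
    Tendsto (fun p => k / listMatchingDenom k q p j)
      (𝓝[{p | ∀ i, 0 < p i}] (Pi.single i₀ 1)) (𝓝 (if j = i₀ then q i₀ else 0)) := by
  split_ifs with hj
  · subst hj
    have hden := (continuousAt_listMatchingDenom_single k q j).tendsto.mono_left
      (nhdsWithin_le_nhds (s := {p | ∀ i, 0 < p i}))
    rw [listMatchingDenom_single k hq, hqsum, mul_one] at hden
    have hk₀ : k ≠ 0 := by positivity
    have h := (tendsto_const_nhds (x := k)).div hden (div_ne_zero hk₀ (hq j).ne')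
    rwa [div_div_cancel₀ hk₀] at h
  · exact tendsto_const_nhds.div_atTop
      (tendsto_listMatchingDenom_atTop hk (fun i => (hq i).le) hj)

theorem tendsto_sum_div_listMatchingDenom [DecidableEq ι] {k : ℝ} (hk : 1 ≤ k) {q : ι → ℝ}
    (hq : ∀ i, 0 < q i) (hqsum : ∑ i, q i = 1) (i₀ : ι) :
    Tendsto (fun p => ∑ j, k / listMatchingDenom k q p j)
      (𝓝[{p | ∀ i, 0 < p i}] (Pi.single i₀ 1)) (𝓝 (q i₀)) := by
  simpa using tendsto_finsetSum Finset.univ fun j _ =>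
    tendsto_div_listMatchingDenom hk hq hqsum i₀ j

end

/-- **Tightness of the list matching bound for degenerate proposal distributions.**
Fix a probability mass function `q` on `{1,…,N}` with `q i > 0` and a positive integer
`K`.  The lower-bound expression
`F p = ∑ j, K / ∑ i (max (q i / q j) (p i / p j) + (K-1) * q i / q j)`,
viewed as a function of the probability mass function `p` (with all `p i > 0`),
converges to `q 0` as `p` tends (within the set of strictly positive pmfs) to the
point mass at the first element.  Since the matching probability equals `q 0` for
the point-mass proposal, the bound is exact in this limit. -/
theorem list_matching_bound_tight_degenerate
    (N K : ℕ) (hN : 0 < N) (hK : 0 < K)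
    (q : Fin N → ℝ) (hq : ∀ i, 0 < q i) (hqsum : ∑ i, q i = 1) :
    Tendsto
      (fun p : Fin N → ℝ => ∑ j : Fin N, (K : ℝ) /
        ∑ i : Fin N, (max (q i / q j) (p i / p j) + ((K : ℝ) - 1) * (q i / q j)))
      (𝓝[{p : Fin N → ℝ | (∀ i, 0 < p i) ∧ ∑ i, p i = 1}]
        (fun i : Fin N => if i = ⟨0, hN⟩ then (1 : ℝ) else 0))
      (𝓝 (q ⟨0, hN⟩)) := by
  have hsingle : (fun i : Fin N => if i = ⟨0, hN⟩ then (1 : ℝ) else 0) = Pi.single ⟨0, hN⟩ 1 :=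
    funext fun i => (Pi.single_apply _ _ _).symm
  rw [hsingle]
  exact (tendsto_sum_div_listMatchingDenom (by exact_mod_cast hK) hq hqsum _).mono_left
    (nhdsWithin_mono _ fun p hp => hp.1)
end

section
/- Matching bound for a sublist of proposals (used for the strongly drafter-invariant scheme): under Gumbel-max list sampling with K sets of shared exponential random variables, for any integer J with 1 ≤ J ≤ K, the probability that Y matches one of the first J proposals satisfies Pr[Y ∈ {X^(1), …, X^(J)}] ≥ Σ_{j=1}^{N} J / ( Σ_{i=1}^{N} [ max{ q_i/q_j , p_i/p_j } + (K − 1)·q_i/q_j ] ). (Here Y is still computed as the argmin over all K sets of randomness.) -/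
/-!
Fix a token `j` and a round `k`. Let `(j, k)` race against every other clock `S i k'` with the
rates `glsRate p q j k`: `max (q i / q j) (p i / p j)` in round `k` and `q i / q j` in the other
rounds. If `S j k` wins, i.e. `rate * S j k < S i k'` for all `(i, k') ≠ (j, k)`, then `(j, k)` is
the joint argmin of `S i k' / q i`, so `Y = j`, and `j` is the argmin of `S i k / p i`, so
`X k = j`. Since the clocks are independent standard exponentials, the race is won with
probability `1 / ∑ rates`, which is exactly the `j`-th denominator of the bound. The winning
events of different pairs `(j, k)` are a.s. disjoint, so summing over all `j` and the first `J`
rounds bounds the probability that `Y` is one of `X 0, …, X (J - 1)`.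
-/

open MeasureTheory ProbabilityTheory

open Set Real

namespace GumbelMaxListSampling

lemma expMeasure_Ioi {r x : ℝ} (hr : 0 < r) (hx : 0 ≤ x) :
    expMeasure r (Ioi x) = ENNReal.ofReal (exp (-(r * x))) := by
  have := isProbabilityMeasure_expMeasure hr
  rw [← compl_Iic, prob_compl_eq_one_sub measurableSet_Iic, ← ofReal_cdf,
    cdf_expMeasure_eq hr, if_pos hx, ← ENNReal.ofReal_one,
    ← ENNReal.ofReal_sub _ (sub_nonneg.2 (exp_le_one_iff.2 (by nlinarith))), sub_sub_cancel]

lemma ae_expMeasure_pos {r : ℝ} (hr : 0 < r) : ∀ᵐ x ∂expMeasure r, 0 < x := by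
  have := isProbabilityMeasure_expMeasure hr
  rw [ae_iff_measure_eq measurableSet_Ioi.nullMeasurableSet]
  exact (expMeasure_Ioi hr le_rfl).trans (by simp)

lemma setLIntegral_Ioi_exp_neg_mul_expMeasure_one {c : ℝ} (hc : 0 ≤ c) :
    ∫⁻ t in Ioi 0, ENNReal.ofReal (exp (-(c * t))) ∂expMeasure 1
      = ENNReal.ofReal (1 / (1 + c)) := by
  have hc1 : 0 < 1 + c := by linarith
  have hdens : ∀ t ∈ Ioi (0 : ℝ), exponentialPDF 1 t * ENNReal.ofReal (exp (-(c * t)))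
      = ENNReal.ofReal (1 / (1 + c)) * exponentialPDF (1 + c) t := by
    intro t ht
    rw [exponentialPDF_of_nonneg (le_of_lt ht), exponentialPDF_of_nonneg (le_of_lt ht),
      ← ENNReal.ofReal_mul (by positivity), ← ENNReal.ofReal_mul (by positivity), one_mul, one_mul,
      ← exp_add, one_div, inv_mul_cancel_left₀ hc1.ne']
    ring_nf
  have hmass : ∫⁻ t in Ioi 0, exponentialPDF (1 + c) t = 1 := by
    have h := expMeasure_Ioi hc1 le_rfl
    rw [expMeasure, gammaMeasure, withDensity_apply _ measurableSet_Ioi] at h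
    rwa [mul_zero, neg_zero, exp_zero, ENNReal.ofReal_one] at h
  rw [expMeasure, gammaMeasure, setLIntegral_withDensity_eq_setLIntegral_mul _
    (show Measurable (gammaPDF 1 1) from (measurable_gammaPDFReal 1 1).ennreal_ofReal)
    (by fun_prop) measurableSet_Ioi]
  calc _ = ∫⁻ t in Ioi 0, ENNReal.ofReal (1 / (1 + c)) * exponentialPDF (1 + c) t :=
        setLIntegral_congr_fun measurableSet_Ioi hdens
    _ = _ := by
      rw [lintegral_const_mul' _ _ ENNReal.ofReal_ne_top, hmass, mul_one]

section Race

variable {ι : Type*} [Fintype ι] [DecidableEq ι]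

lemma pi_setOf_forall_ne_mul_lt (ν : Measure ℝ) [SigmaFinite ν] (m₀ : ι) (c : ι → ℝ) :
    Measure.pi (fun _ : ι => ν) {x | ∀ m ≠ m₀, c m * x m₀ < x m}
      = ∫⁻ t, ∏ m : {m // m ≠ m₀}, ν (Ioi (c m * t)) ∂ν := by
  set T : Set (({m // m = m₀} → ℝ) × ({m // m ≠ m₀} → ℝ)) :=
    {uy | ∀ m : {m // m ≠ m₀}, c m * uy.1 ⟨m₀, rfl⟩ < uy.2 m} with hT
  have hTmeas : MeasurableSet T := by
    rw [hT, ofPred_forall]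
    exact .iInter fun m => measurableSet_lt (by fun_prop) (by fun_prop)
  have hpre : MeasurableEquiv.piEquivPiSubtypeProd (fun _ : ι => ℝ) (· = m₀) ⁻¹' T
      = {x | ∀ m ≠ m₀, c m * x m₀ < x m} := by
    ext x
    simp [T, MeasurableEquiv.piEquivPiSubtypeProd, Equiv.piEquivPiSubtypeProd]
  have hslice (u : {m // m = m₀} → ℝ) :
      Prod.mk u ⁻¹' T = Set.pi univ fun m : {m // m ≠ m₀} => Ioi (c m * u ⟨m₀, rfl⟩) := by
    ext y; simp [T]
  rw [← hpre, (measurePreserving_piEquivPiSubtypeProd _ _).measure_preimage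
    hTmeas.nullMeasurableSet, Measure.prod_apply hTmeas]
  simp only [hslice, Measure.pi_pi]
  convert (measurePreserving_funUnique ν {m // m = m₀}).lintegral_comp_emb
    (MeasurableEquiv.measurableEmbedding _) (fun t => ∏ m : {m // m ≠ m₀}, ν (Ioi (c m * t)))
  rfl

lemma ofReal_le_pi_expMeasure_setOf_forall_ne_mul_lt (m₀ : ι) {c : ι → ℝ} (hc : ∀ m, 0 ≤ c m) :
    ENNReal.ofReal (1 / (1 + ∑ m : {m // m ≠ m₀}, c m))
      ≤ Measure.pi (fun _ : ι => expMeasure 1) {x | ∀ m ≠ m₀, c m * x m₀ < x m} := by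
  have := isProbabilityMeasure_expMeasure one_pos
  rw [pi_setOf_forall_ne_mul_lt, ← setLIntegral_Ioi_exp_neg_mul_expMeasure_one
    (Finset.sum_nonneg fun (m : {m // m ≠ m₀}) _ => hc m)]
  refine (setLIntegral_congr_fun measurableSet_Ioi fun t ht => ?_).trans_le
    (setLIntegral_le_lintegral _ _)
  simp only [expMeasure_Ioi one_pos (mul_nonneg (hc _) (le_of_lt ht)), one_mul]
  rw [← ENNReal.ofReal_prod_of_nonneg fun m _ => (exp_pos _).le, ← exp_sum, Finset.sum_mul,
    Finset.sum_neg_distrib]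

lemma ofReal_le_measure_forall_ne_mul_lt {Ω : Type*} [MeasurableSpace Ω] {μ : Measure Ω}
    {f : ι → Ω → ℝ} (hf : ∀ m, AEMeasurable (f m) μ) (hind : iIndepFun f μ)
    (hexp : ∀ m, μ.map (f m) = expMeasure 1) (m₀ : ι) {c : ι → ℝ} (hc : ∀ m, 0 ≤ c m) :
    ENNReal.ofReal (1 / (1 + ∑ m : {m // m ≠ m₀}, c m))
      ≤ μ {ω | ∀ m ≠ m₀, c m * f m₀ ω < f m ω} := by
  have hA : MeasurableSet {x : ι → ℝ | ∀ m ≠ m₀, c m * x m₀ < x m} := by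
    measurability
  calc _ ≤ Measure.pi (fun _ : ι => expMeasure 1) {x | ∀ m ≠ m₀, c m * x m₀ < x m} :=
        ofReal_le_pi_expMeasure_setOf_forall_ne_mul_lt m₀ hc
    _ = μ.map (fun ω m => f m ω) {x | ∀ m ≠ m₀, c m * x m₀ < x m} := by
        simp_rw [hind.map_fun_eq_pi_map hf, hexp]
    _ = μ {ω | ∀ m ≠ m₀, c m * f m₀ ω < f m ω} :=
        Measure.map_apply_of_aemeasurable (aemeasurable_pi_lambda _ hf) hA

end Race

lemma sum_measure_le_measure_of_ae {ι Ω : Type*} [MeasurableSpace Ω] {μ : Measure Ω}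
    {P : Finset ι} {E : ι → Set Ω} {T : Set Ω} (hE : ∀ a ∈ P, NullMeasurableSet (E a) μ)
    (h : ∀ᵐ ω ∂μ, ∀ a ∈ P, ω ∈ E a → ω ∈ T ∧ ∀ b ∈ P, ω ∈ E b → b = a) :
    ∑ a ∈ P, μ (E a) ≤ μ T := by
  rw [← measure_biUnion_finset₀ ?_ hE]
  · refine measure_mono_ae (h.mono fun ω hω hmem => ?_)
    obtain ⟨a, ha, hωa⟩ := mem_iUnion₂.1 hmem
    exact (hω a ha hωa).1
  · intro a ha b hb hab
    exact measure_eq_zero_iff_ae_notMem.2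
      (h.mono fun ω hω hωab => hab ((hω a ha hωab.1).2 b hb hωab.2).symm)

lemma div_lt_div_of_le_of_mul_lt {a b c d r : ℝ} (hb : 0 < b) (hd : 0 < d) (ha : 0 ≤ a)
    (hr : d / b ≤ r) (h : r * a < c) : a / b < c / d := by
  have h' : d / b * a < c := (mul_le_mul_of_nonneg_right hr ha).trans_lt h
  rw [div_mul_eq_mul_div, div_lt_iff₀ hb] at h'
  rw [div_lt_div_iff₀ hb hd]
  linarith

section Rates

variable {α κ : Type*} [DecidableEq κ] {p q : α → ℝ}

noncomputable def glsRate (p q : α → ℝ) (j : α) (k : κ) (m : α × κ) : ℝ :=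
  if m.2 = k then max (q m.1 / q j) (p m.1 / p j) else q m.1 / q j

lemma glsRate_self {j : α} (k : κ) (hpj : p j ≠ 0) (hqj : q j ≠ 0) :
    glsRate p q j k (j, k) = 1 := by
  simp [glsRate, div_self hpj, div_self hqj]

lemma div_le_glsRate (j : α) (k : κ) (m : α × κ) : q m.1 / q j ≤ glsRate p q j k m := by
  unfold glsRate
  split_ifs
  exacts [le_max_left _ _, le_rfl]

lemma div_le_glsRate_mk (j i : α) (k : κ) : p i / p j ≤ glsRate p q j k (i, k) := by
  simp [glsRate]

lemma glsRate_nonneg (hq : ∀ i, 0 ≤ q i) (j : α) (k : κ) (m : α × κ) :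
    0 ≤ glsRate p q j k m :=
  (div_nonneg (hq _) (hq _)).trans (div_le_glsRate j k m)

lemma sum_glsRate [Fintype α] [Fintype κ] (j : α) (k : κ) :
    ∑ m, glsRate p q j k m
      = ∑ i, (max (q i / q j) (p i / p j) + ((Fintype.card κ : ℝ) - 1) * (q i / q j)) := by
  rw [Fintype.sum_prod_type]
  refine Finset.sum_congr rfl fun i _ => ?_
  have h : ∀ k', glsRate p q j k (i, k')
      = q i / q j + if k' = k then max (q i / q j) (p i / p j) - q i / q j else 0 := by
    intro k'
    unfold glsRate
    split_ifs <;> ring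
  simp only [h, Finset.sum_add_distrib, Finset.sum_const, Finset.card_univ, nsmul_eq_mul,
    Finset.sum_ite_eq', Finset.mem_univ, if_true]
  ring

lemma one_add_sum_glsRate_ne [Fintype α] [Fintype κ] [DecidableEq α] {j : α} (k : κ)
    (hpj : p j ≠ 0) (hqj : q j ≠ 0) :
    1 + ∑ m : {m // m ≠ (j, k)}, glsRate p q j k m
      = ∑ i, (max (q i / q j) (p i / p j) + ((Fintype.card κ : ℝ) - 1) * (q i / q j)) := by
  rw [← sum_glsRate, Fintype.sum_eq_add_sum_subtype_ne _ (j, k), glsRate_self k hpj hqj]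

end Rates

section Winner

variable {α κ : Type*} [DecidableEq κ] {p q : α → ℝ} {s : α → κ → ℝ} {j : α} {k : κ}

def WinsGLSRace (p q : α → ℝ) (s : α → κ → ℝ) (j : α) (k : κ) : Prop :=
  ∀ m ≠ (j, k), glsRate p q j k m * s j k < s m.1 m.2

lemma WinsGLSRace.div_lt_div_q (h : WinsGLSRace p q s j k) (hs : 0 ≤ s j k) (hq : ∀ i, 0 < q i)
    {m : α × κ} (hm : m ≠ (j, k)) : s j k / q j < s m.1 m.2 / q m.1 :=
  div_lt_div_of_le_of_mul_lt (hq j) (hq m.1) hs (div_le_glsRate j k m) (h m hm)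

lemma WinsGLSRace.div_lt_div_p (h : WinsGLSRace p q s j k) (hs : 0 ≤ s j k) (hp : ∀ i, 0 < p i)
    {i : α} (hi : i ≠ j) : s j k / p j < s i k / p i :=
  div_lt_div_of_le_of_mul_lt (hp j) (hp i) hs (div_le_glsRate_mk j i k)
    (h (i, k) (by simpa using hi))

lemma WinsGLSRace.proposal_eq (h : WinsGLSRace p q s j k) (hs : 0 ≤ s j k) (hp : ∀ i, 0 < p i)
    {x : α} (hx : ∀ i ≠ x, s x k / p x < s i k / p i) : x = j := by
  by_contra hne
  exact lt_asymm (hx j (Ne.symm hne)) (h.div_lt_div_p hs hp hne)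

lemma WinsGLSRace.target_eq [Finite κ] (h : WinsGLSRace p q s j k) (hs : 0 ≤ s j k)
    (hq : ∀ i, 0 < q i) {y : α}
    (hy : ∀ i ≠ y, (⨅ k, s y k) / q y < (⨅ k, s i k) / q i) : y = j := by
  by_contra hne
  have : Nonempty κ := ⟨k⟩
  obtain ⟨k', hk'⟩ := exists_eq_ciInf_of_finite (f := s y)
  have hwin : s j k / q j < (⨅ k, s y k) / q y :=
    hk' ▸ h.div_lt_div_q hs hq (m := (y, k')) (by simp [hne])
  have hinf : (⨅ k, s j k) / q j ≤ s j k / q j :=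
    div_le_div_of_nonneg_right (ciInf_le (Finite.bddBelow_range _) k) (hq j).le
  linarith [hy j (Ne.symm hne)]

lemma WinsGLSRace.unique {j' : α} {k' : κ} (h : WinsGLSRace p q s j k)
    (h' : WinsGLSRace p q s j' k') (hs : 0 ≤ s j k) (hs' : 0 ≤ s j' k') (hq : ∀ i, 0 < q i) :
    (j', k') = (j, k) := by
  by_contra hne
  exact lt_asymm (h.div_lt_div_q hs hq hne) (h'.div_lt_div_q hs' hq (Ne.symm hne))

end Winner

section Sampling

variable {α κ Ω : Type*} [Fintype α] [Fintype κ] [DecidableEq κ] [MeasurableSpace Ω]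
  {μ : Measure Ω} {p q : α → ℝ} {S : α → κ → Ω → ℝ}

lemma measurableSet_setOf_winsGLSRace (hS : ∀ i k, Measurable (S i k)) (j : α) (k : κ) :
    MeasurableSet {ω | WinsGLSRace p q (fun i k => S i k ω) j k} := by
  simp only [WinsGLSRace]
  measurability

lemma ofReal_le_measure_setOf_winsGLSRace [DecidableEq α] (hS : ∀ i k, AEMeasurable (S i k) μ)
    (hind : iIndepFun (fun m : α × κ => S m.1 m.2) μ)
    (hexp : ∀ i k, μ.map (S i k) = expMeasure 1) (hp : ∀ i, 0 < p i) (hq : ∀ i, 0 < q i)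
    (j : α) (k : κ) :
    ENNReal.ofReal
        (1 / ∑ i, (max (q i / q j) (p i / p j) + ((Fintype.card κ : ℝ) - 1) * (q i / q j)))
      ≤ μ {ω | WinsGLSRace p q (fun i k => S i k ω) j k} := by
  rw [← one_add_sum_glsRate_ne k (hp j).ne' (hq j).ne']
  exact ofReal_le_measure_forall_ne_mul_lt (fun m => hS m.1 m.2) hind (fun m => hexp m.1 m.2)
    (j, k) (glsRate_nonneg (fun i => (hq i).le) j k)

end Sampling

end GumbelMaxListSampling

open GumbelMaxListSampling

theorem list_matching_sublist_bound_general
    {Ω : Type*} [MeasurableSpace Ω] (μ : Measure Ω)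
    (N K : ℕ)
    (p q : Fin N → ℝ) (hp : ∀ i, 0 < p i) (hq : ∀ i, 0 < q i)
    (S : Fin N → Fin K → Ω → ℝ) (hSmeas : ∀ i k, Measurable (S i k))
    (hSindep : iIndepFun
      (fun ik : Fin N × Fin K => S ik.1 ik.2) μ)
    (hSexp : ∀ i k, μ.map (S i k) = expMeasure 1)
    (Y : Ω → Fin N)
    (X : Fin K → Ω → Fin N)
    -- `Y` is a.s. the unique argmin of `i ↦ (min_k S i k) / q i`
    (hY : ∀ᵐ ω ∂μ, ∀ i : Fin N, i ≠ Y ω →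
      (⨅ k : Fin K, S (Y ω) k ω) / q (Y ω) < (⨅ k : Fin K, S i k ω) / q i)
    -- each `X k` is a.s. the unique argmin of `i ↦ S i k / p i`
    (hX : ∀ᵐ ω ∂μ, ∀ k : Fin K, ∀ i : Fin N, i ≠ X k ω →
      S (X k ω) k ω / p (X k ω) < S i k ω / p i)
    (J : ℕ) (hJK : J ≤ K) :
    ENNReal.ofReal (∑ j : Fin N, (J : ℝ) /
        ∑ i : Fin N, (max (q i / q j) (p i / p j) + ((K : ℝ) - 1) * (q i / q j)))
      ≤ μ {ω | ∃ k : Fin K, (k : ℕ) < J ∧ X k ω = Y ω} := by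
  set D : Fin N → ℝ :=
    fun j => ∑ i, (max (q i / q j) (p i / p j) + ((K : ℝ) - 1) * (q i / q j))
  set E : Fin N × Fin K → Set Ω :=
    fun m => {ω | WinsGLSRace p q (fun i k => S i k ω) m.1 m.2}
  set P : Finset (Fin N × Fin K) := Finset.univ ×ˢ ({k | (k : ℕ) < J} : Finset (Fin K))
  set T : Set Ω := {ω | ∃ k : Fin K, (k : ℕ) < J ∧ X k ω = Y ω}
  have hpos : ∀ᵐ ω ∂μ, ∀ i k, 0 < S i k ω :=
    ae_all_iff.2 fun i => ae_all_iff.2 fun k => ae_of_ae_map (hSmeas i k).aemeasurable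
      (hSexp i k ▸ ae_expMeasure_pos one_pos)
  have hgood : ∀ᵐ ω ∂μ, ∀ m ∈ P, ω ∈ E m → ω ∈ T ∧ ∀ m' ∈ P, ω ∈ E m' → m' = m := by
    filter_upwards [hpos, hY, hX] with ω hpos hYω hXω
    rintro ⟨j, k⟩ hm (hwin : WinsGLSRace p q (fun i k => S i k ω) j k)
    refine ⟨⟨k, by simpa [P] using hm, ?_⟩, ?_⟩
    · rw [hwin.proposal_eq (hpos j k).le hp (hXω k), hwin.target_eq (hpos j k).le hq hYω]
    · rintro ⟨j', k'⟩ - (hwin' : WinsGLSRace p q (fun i k => S i k ω) j' k')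
      exact hwin.unique hwin' (hpos j k).le (hpos j' k').le hq
  calc ENNReal.ofReal (∑ j, (J : ℝ) / D j) ≤ ∑ j, ENNReal.ofReal (J / D j) :=
        Finset.le_sum_of_subadditive _ ENNReal.ofReal_zero.le
          (fun _ _ => ENNReal.ofReal_add_le) _ _
    _ = ∑ m ∈ P, ENNReal.ofReal (1 / D m.1) := by
        simp [P, Finset.sum_product, Fin.card_filter_val_lt, hJK, ENNReal.ofReal_mul,
          div_eq_mul_inv]
    _ ≤ ∑ m ∈ P, μ (E m) := Finset.sum_le_sum fun m _ => by
        simpa [D] using ofReal_le_measure_setOf_winsGLSRace (fun i k => (hSmeas i k).aemeasurable)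
          hSindep hSexp hp hq m.1 m.2
    _ ≤ μ T := sum_measure_le_measure_of_ae
        (fun m _ => (measurableSet_setOf_winsGLSRace hSmeas m.1 m.2).nullMeasurableSet) hgood

/-- **Matching bound for a sublist of proposals (strongly drafter-invariant scheme).**
Under Gumbel-max list sampling with `K` sets of shared exponentials (and `Y` computed
as the argmin over all `K` sets), for any `1 ≤ J ≤ K`,
`Pr[Y ∈ {X 1, …, X J}] ≥ ∑ j, J / ∑ i (max (q i / q j) (p i / p j) + (K-1) * q i / q j)`. -/
theorem list_matching_sublist_bound
    {Ω : Type*} [MeasurableSpace Ω] (μ : Measure Ω) [IsProbabilityMeasure μ]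
    (N K : ℕ) (hN : 0 < N) (hK : 0 < K)
    (p q : Fin N → ℝ) (hp : ∀ i, 0 < p i) (hq : ∀ i, 0 < q i)
    (hpsum : ∑ i, p i = 1) (hqsum : ∑ i, q i = 1)
    (S : Fin N → Fin K → Ω → ℝ) (hSmeas : ∀ i k, Measurable (S i k))
    (hSindep : iIndepFun
      (fun ik : Fin N × Fin K => S ik.1 ik.2) μ)
    (hSexp : ∀ i k, μ.map (S i k) = expMeasure 1)
    (Y : Ω → Fin N) (hYmeas : Measurable Y)
    (X : Fin K → Ω → Fin N) (hXmeas : ∀ k, Measurable (X k))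
    -- `Y` is a.s. the unique argmin of `i ↦ (min_k S i k) / q i`
    (hY : ∀ᵐ ω ∂μ, ∀ i : Fin N, i ≠ Y ω →
      (⨅ k : Fin K, S (Y ω) k ω) / q (Y ω) < (⨅ k : Fin K, S i k ω) / q i)
    -- each `X k` is a.s. the unique argmin of `i ↦ S i k / p i`
    (hX : ∀ᵐ ω ∂μ, ∀ k : Fin K, ∀ i : Fin N, i ≠ X k ω →
      S (X k ω) k ω / p (X k ω) < S i k ω / p i)
    (J : ℕ) (hJ1 : 1 ≤ J) (hJK : J ≤ K) :
    ENNReal.ofReal (∑ j : Fin N, (J : ℝ) /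
        ∑ i : Fin N, (max (q i / q j) (p i / p j) + ((K : ℝ) - 1) * (q i / q j)))
      ≤ μ {ω | ∃ k : Fin K, (k : ℕ) < J ∧ X k ω = Y ω} :=
  list_matching_sublist_bound_general μ N K p q hp hq S hSmeas hSindep hSexp Y X hY hX J hJK
end
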